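/- For any tuple of positive integers (m_1,…,m_r) with m = lcm(m_1,…,m_r), one has E(m_1,…,m_r) = ∏_{p prime, p | m} (p−1)^{r(p)−s(p)+1} · p^{v(p)} · h_{s(p)}(p) (the empty product, for m = 1, being 1). -/

import Mathlib

/-- The von Sterneck function `Φ(k,n) = μ(n/gcd(k,n)) * φ(n) / φ(n/gcd(k,n))`. -/
noncomputable def vonSterneck (k n : ℕ) : ℚ :=
  (ArithmeticFunction.moebius (n / Nat.gcd k n) : ℚ) * (Nat.totient n : ℚ) /
    (Nat.totient (n / Nat.gcd k n) : ℚ)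

/-- The orbicyclic function `E(m_1,…,m_r)`. -/
noncomputable def orbE {r : ℕ} (m : Fin r → ℕ) : ℚ :=
  (∑ k ∈ Finset.Icc 1 (Finset.univ.lcm m), ∏ j, vonSterneck k (m j)) /
    ((Finset.univ.lcm m : ℕ) : ℚ)

/-- The polynomial `h_s(x) = ((x-1)^(s-1) + (-1)^s)/x`. -/
noncomputable def hpoly (s : ℕ) (x : ℚ) : ℚ := ((x - 1) ^ (s - 1) + (-1) ^ s) / x

/-!
Replacing each `m_j` by `gcd(m_j, d)` turns the sum defining `E` into a mean over `k < d` that is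
multiplicative in `d`: `Φ(k, ·)` is multiplicative, `Φ(·, n)` has period `n`, and the Chinese
remainder theorem splits a sum over `ℤ/de` into a product of sums over `ℤ/d` and `ℤ/e`. Hence
`E` is a product of local factors, one for each prime power `p^a` exactly dividing `lcm m`. With
`a_j` the exponent of `p` in `m_j`, `Φ(k, p^a)` vanishes unless `p^(a-1) ∣ k`, so only
`k = p^(a-1) u` with `u < p` contribute: `u = 0` gives `∏ φ(p^(a_j))`, and each of the `p - 1`
other values gives the same product with `φ(p^a) = p^(a-1) (p - 1)` replaced by `-p^(a-1)` for
the `s(p)` indices with `a_j = a`.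
-/

open Finset Function

lemma vonSterneck_periodic (n : ℕ) : Periodic (fun k => vonSterneck k n) n := by
  intro k
  simp only [vonSterneck, Nat.gcd_add_self_left]

lemma vonSterneck_periodic_of_dvd {n N : ℕ} (h : n ∣ N) :
    Periodic (fun k => vonSterneck k n) N := by
  obtain ⟨c, rfl⟩ := h
  rw [mul_comm]
  exact (vonSterneck_periodic n).nat_mul c

lemma vonSterneck_mul_of_coprime (k : ℕ) {a b : ℕ} (hab : a.Coprime b) :
    vonSterneck k (a * b) = vonSterneck k a * vonSterneck k b := by
  have hga : k.gcd a ∣ a := Nat.gcd_dvd_right _ _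
  have hgb : k.gcd b ∣ b := Nat.gcd_dvd_right _ _
  have hquot : a / k.gcd a * (b / k.gcd b) = a * b / k.gcd (a * b) := by
    rw [Nat.Coprime.gcd_mul k hab, Nat.div_mul_div_comm hga hgb]
  have hcop : (a / k.gcd a).Coprime (b / k.gcd b) :=
    (hab.coprime_dvd_left (Nat.div_dvd_of_dvd hga)).coprime_dvd_right (Nat.div_dvd_of_dvd hgb)
  simp only [vonSterneck, ← hquot, Nat.totient_mul hab, Nat.totient_mul hcop,
    ArithmeticFunction.isMultiplicative_moebius.map_mul_of_coprime hcop]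
  push_cast
  ring

lemma vonSterneck_of_dvd {n k : ℕ} (h : n ∣ k) : vonSterneck k n = n.totient := by
  rcases n.eq_zero_or_pos with rfl | hn
  · simp [vonSterneck]
  · simp [vonSterneck, Nat.gcd_eq_right h, Nat.div_self hn]

lemma vonSterneck_prime_pow_succ {p a k : ℕ} (hp : p.Prime) (h : p ^ a ∣ k)
    (h' : ¬ p ^ (a + 1) ∣ k) : vonSterneck k (p ^ (a + 1)) = -(p : ℚ) ^ a := by
  obtain ⟨i, hi, hg⟩ := (Nat.dvd_prime_pow hp).mp (Nat.gcd_dvd_right k (p ^ (a + 1)))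
  have hai : a ≤ i := (Nat.pow_dvd_pow_iff_le_right hp.one_lt).mp
    (hg ▸ Nat.dvd_gcd h (pow_dvd_pow p a.le_succ))
  have hia : i ≠ a + 1 := fun hi' => h' (hi' ▸ hg ▸ Nat.gcd_dvd_left k _)
  obtain rfl : a = i := by omega
  have hq : p ^ (a + 1) / p ^ a = p := by
    rw [pow_succ, Nat.mul_div_cancel_left _ (pow_pos hp.pos a)]
  have hp1 : (p : ℚ) - 1 ≠ 0 := sub_ne_zero.mpr (by exact_mod_cast hp.one_lt.ne')
  rw [vonSterneck, hg, hq, ArithmeticFunction.moebius_apply_prime hp, Nat.totient_prime hp,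
    Nat.totient_prime_pow_succ hp]
  push_cast [Nat.cast_sub hp.one_le]
  field_simp

lemma vonSterneck_prime_pow_succ_of_not_dvd {p a k : ℕ} (hp : p.Prime) (h : ¬ p ^ a ∣ k) :
    vonSterneck k (p ^ (a + 1)) = 0 := by
  obtain ⟨i, hi, hg⟩ := (Nat.dvd_prime_pow hp).mp (Nat.gcd_dvd_right k (p ^ (a + 1)))
  have hia : i < a := by
    by_contra! hai
    exact h ((pow_dvd_pow p hai).trans (hg ▸ Nat.gcd_dvd_left k _))
  rw [vonSterneck, hg, Nat.pow_div hi hp.pos, ArithmeticFunction.moebius_apply_prime_pow hp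
    (by omega), if_neg (by omega)]
  simp

lemma sum_range_eq_sum_zmod_val {M : Type*} [AddCommMonoid M] (N : ℕ) [NeZero N] (f : ℕ → M) :
    ∑ k ∈ range N, f k = ∑ x : ZMod N, f x.val := by
  refine sum_nbij' (fun k => (k : ZMod N)) ZMod.val (by simp) (fun x _ => by simp [ZMod.val_lt])
    (fun k hk => ZMod.val_cast_of_lt (mem_range.mp hk)) (fun x _ => by simp)
    fun k hk => by rw [ZMod.val_cast_of_lt (mem_range.mp hk)]

lemma sum_range_mul_of_periodic {M : Type*} [CommSemiring M] {A B : ℕ} [NeZero A] [NeZero B]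
    (hAB : A.Coprime B) {f g : ℕ → M} (hf : Periodic f A) (hg : Periodic g B) :
    ∑ k ∈ range (A * B), f k * g k = (∑ k ∈ range A, f k) * ∑ k ∈ range B, g k := by
  let e := (ZMod.chineseRemainder hAB).toEquiv
  have he : ∀ x : ZMod (A * B), f x.val * g x.val = f (e x).1.val * g (e x).2.val := by
    intro x
    have : e x = ((x.val : ZMod A), (x.val : ZMod B)) := by
      conv_lhs => rw [← ZMod.natCast_zmod_val x]
      exact map_natCast (ZMod.chineseRemainder hAB) x.val
    rw [this, ZMod.val_natCast, ZMod.val_natCast, hf.map_mod_nat, hg.map_mod_nat]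
  rw [sum_range_eq_sum_zmod_val, sum_range_eq_sum_zmod_val A, sum_range_eq_sum_zmod_val B,
    Fintype.sum_equiv e _ (fun y => f y.1.val * g y.2.val) he, Fintype.sum_prod_type,
    Fintype.sum_mul_sum]

lemma sum_Icc_one_eq_sum_range_of_periodic {M : Type*} [AddCommMonoid M] [IsRightCancelAdd M]
    {f : ℕ → M} {N : ℕ} (hf : Periodic f N) :
    ∑ k ∈ Icc 1 N, f k = ∑ k ∈ range N, f k := by
  have hshift : ∑ k ∈ range N, f (k + 1) + f 0 = ∑ k ∈ range N, f k + f 0 := by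
    rw [← sum_range_succ', sum_range_succ, hf.eq]
  rw [← add_right_cancel hshift, range_eq_Ico, sum_Ico_add' f 0 N 1, zero_add,
    Ico_add_one_right_eq_Icc]

section orbMean

variable {ι : Type*} [Fintype ι] (m : ι → ℕ)

noncomputable def orbMean (d : ℕ) : ℚ :=
  (∑ k ∈ range d, ∏ j, vonSterneck k ((m j).gcd d)) / d

lemma orbMean_one : orbMean m 1 = 1 := by
  simp [orbMean, vonSterneck_of_dvd]

lemma orbMean_mul {d e : ℕ} (hde : d.Coprime e) :
    orbMean m (d * e) = orbMean m d * orbMean m e := by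
  rcases eq_or_ne d 0 with rfl | hd
  · simp [(Nat.coprime_zero_left e).mp hde, orbMean_one]
  rcases eq_or_ne e 0 with rfl | he
  · simp [(Nat.coprime_zero_right d).mp hde, orbMean_one]
  have := NeZero.mk hd
  have := NeZero.mk he
  have hsplit : ∀ k, ∏ j, vonSterneck k ((m j).gcd (d * e)) =
      (∏ j, vonSterneck k ((m j).gcd d)) * ∏ j, vonSterneck k ((m j).gcd e) := fun k => by
    rw [← prod_mul_distrib]
    refine prod_congr rfl fun j _ => ?_
    rw [Nat.Coprime.gcd_mul _ hde, vonSterneck_mul_of_coprime k (Nat.Coprime.gcd_both _ _ hde)]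
  have hper : ∀ n, Periodic (fun k => ∏ j, vonSterneck k ((m j).gcd n)) n := fun n k =>
    prod_congr rfl fun j _ => vonSterneck_periodic_of_dvd (Nat.gcd_dvd_right _ _) k
  simp only [orbMean]
  rw [sum_congr rfl fun k _ => hsplit k, sum_range_mul_of_periodic hde (hper d) (hper e),
    Nat.cast_mul, mul_div_mul_comm]

lemma orbMean_eq_prod_primeFactors {d : ℕ} (hd : d ≠ 0) :
    orbMean m d = ∏ p ∈ d.primeFactors, orbMean m (p ^ d.factorization p) := by
  rw [Nat.multiplicative_factorization (orbMean m) (fun _ _ => orbMean_mul m) (orbMean_one m) hd,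
    Nat.prod_factorization_eq_prod_primeFactors]

end orbMean

lemma orbE_eq_orbMean {r : ℕ} (m : Fin r → ℕ) : orbE m = orbMean m (univ.lcm m) := by
  have hgcd : ∀ j, (m j).gcd (univ.lcm m) = m j := fun j => Nat.gcd_eq_left (dvd_lcm (mem_univ j))
  have hper : Periodic (fun k => ∏ j, vonSterneck k (m j)) (univ.lcm m) := fun k =>
    prod_congr rfl fun j _ => vonSterneck_periodic_of_dvd (dvd_lcm (mem_univ j)) k
  simp only [orbE, orbMean, hgcd, sum_Icc_one_eq_sum_range_of_periodic hper]

lemma prod_totient_prime_pow {ι : Type*} (s : Finset ι) {p : ℕ} (hp : p.Prime) (b : ι → ℕ) :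
    ∏ j ∈ s, (p ^ b j).totient =
      (p - 1) ^ #{j ∈ s | 1 ≤ b j} * p ^ ∑ j ∈ s with 1 ≤ b j, (b j - 1) := by
  have hdrop : ∏ j ∈ s with 1 ≤ b j, (p ^ b j).totient = ∏ j ∈ s, (p ^ b j).totient :=
    prod_filter_of_ne fun j _ hj => Nat.one_le_iff_ne_zero.mpr fun h0 => hj (by simp [h0])
  rw [← hdrop, prod_congr rfl fun j (hj : j ∈ {j ∈ s | 1 ≤ b j}) =>
      Nat.totient_prime_pow hp (mem_filter.mp hj).2,
    prod_mul_distrib, prod_pow_eq_pow_sum, prod_const, mul_comm]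

section LocalFactor

variable {ι : Type*} [Fintype ι] {p a : ℕ}

lemma sum_range_prime_pow_prod_vonSterneck (hp : p.Prime) (b : ι → ℕ)
    (hb : ∀ j, b j ≤ a + 1) (hex : ∃ j, b j = a + 1) :
    ∑ k ∈ range (p ^ (a + 1)), ∏ j, vonSterneck k (p ^ b j) =
      ∏ j, ((p ^ b j).totient : ℚ) +
        (p - 1) * ∏ j, if b j = a + 1 then -(p : ℚ) ^ a else ((p ^ b j).totient : ℚ) := by
  obtain ⟨j₀, hj₀⟩ := hex
  have hvanish : ∀ k ∈ range (p ^ (a + 1)), k ∉ (range p).image (p ^ a * ·) →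
      ∏ j, vonSterneck k (p ^ b j) = 0 := by
    intro k hk hkim
    refine prod_eq_zero (mem_univ j₀) (hj₀ ▸ vonSterneck_prime_pow_succ_of_not_dvd hp ?_)
    rintro ⟨u, rfl⟩
    refine hkim (mem_image.mpr ⟨u, mem_range.mpr ?_, rfl⟩)
    rw [mem_range, pow_succ] at hk
    exact Nat.lt_of_mul_lt_mul_left hk
  have hsub : (range p).image (p ^ a * ·) ⊆ range (p ^ (a + 1)) := by
    intro k hk
    obtain ⟨u, hu, rfl⟩ := mem_image.mp hk
    rw [mem_range, pow_succ]
    exact Nat.mul_lt_mul_of_pos_left (mem_range.mp hu) (pow_pos hp.pos a)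
  have hunit : ∀ u ∈ Ico 1 p, ∏ j, vonSterneck (p ^ a * u) (p ^ b j) =
      ∏ j, if b j = a + 1 then -(p : ℚ) ^ a else ((p ^ b j).totient : ℚ) := by
    intro u hu
    obtain ⟨hu1, hup⟩ := mem_Ico.mp hu
    refine prod_congr rfl fun j _ => ?_
    split_ifs with hj
    · rw [hj]
      refine vonSterneck_prime_pow_succ hp (dvd_mul_right _ _) fun hdvd => ?_
      rw [pow_succ, Nat.mul_dvd_mul_iff_left (pow_pos hp.pos a)] at hdvd
      exact absurd (Nat.le_of_dvd hu1 hdvd) (not_le.mpr hup)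
    · exact vonSterneck_of_dvd ((pow_dvd_pow p (by have := hb j; omega)).trans (dvd_mul_right _ _))
  rw [← sum_subset hsub hvanish, sum_image fun x _ y _ h => Nat.eq_of_mul_eq_mul_left
    (pow_pos hp.pos a) h, range_eq_Ico, sum_eq_sum_Ico_succ_bot hp.pos, sum_congr rfl hunit,
    sum_const, Nat.card_Ico, nsmul_eq_mul, Nat.cast_sub hp.one_le, mul_zero]
  simp only [vonSterneck_of_dvd (dvd_zero _), Nat.cast_one]

lemma prod_ite_neg_pow_mul_sub_one_pow (hp : p.Prime) (b : ι → ℕ) :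
    (∏ j, if b j = a + 1 then -(p : ℚ) ^ a else ((p ^ b j).totient : ℚ)) *
        ((p : ℚ) - 1) ^ #{j | b j = a + 1} =
      (-1) ^ #{j | b j = a + 1} * ∏ j, ((p ^ b j).totient : ℚ) := by
  have hpow : ∀ c : ℚ, c ^ #{j | b j = a + 1} = ∏ j, if b j = a + 1 then c else 1 := fun c => by
    rw [prod_ite, prod_const, prod_const_one, mul_one]
  rw [hpow, hpow, ← prod_mul_distrib, ← prod_mul_distrib]
  refine prod_congr rfl fun j _ => ?_
  split_ifs with hj
  · rw [hj, Nat.totient_prime_pow_succ hp]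
    push_cast [Nat.cast_sub hp.one_le]
    ring
  · ring

lemma sum_range_prime_pow_prod_vonSterneck_div (hp : p.Prime) (b : ι → ℕ)
    (hb : ∀ j, b j ≤ a + 1) (hex : ∃ j, b j = a + 1) :
    (∑ k ∈ range (p ^ (a + 1)), ∏ j, vonSterneck k (p ^ b j)) / (p : ℚ) ^ (a + 1) =
      ((p : ℚ) - 1) ^ (#{j | 1 ≤ b j} - #{j | b j = a + 1} + 1) *
        (p : ℚ) ^ ((∑ j with 1 ≤ b j, (b j - 1)) + 1 - (a + 1)) *
        hpoly #{j | b j = a + 1} p := by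
  obtain ⟨j₀, hj₀⟩ := hex
  rw [sum_range_prime_pow_prod_vonSterneck hp b hb ⟨j₀, hj₀⟩]
  have hQ := prod_ite_neg_pow_mul_sub_one_pow (a := a) hp b
  set t := #{j | 1 ≤ b j}
  set s := #{j | b j = a + 1}
  set S := ∑ j with 1 ≤ b j, (b j - 1)
  set Q := ∏ j, if b j = a + 1 then -(p : ℚ) ^ a else ((p ^ b j).totient : ℚ)
  have hs : 1 ≤ s := card_pos.mpr ⟨j₀, by simp [hj₀]⟩
  have hst : s ≤ t := card_le_card fun j => by simp only [mem_filter, mem_univ, true_and]; omega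
  have haS : a ≤ S := by
    simpa [hj₀] using single_le_sum (f := fun j => b j - 1) (fun _ _ => Nat.zero_le _)
      (mem_filter.mpr ⟨mem_univ j₀, by omega⟩)
  have hP : ∏ j, ((p ^ b j).totient : ℚ) = ((p : ℚ) - 1) ^ t * (p : ℚ) ^ S := by
    rw [← Nat.cast_prod, prod_totient_prime_pow _ hp]
    push_cast [Nat.cast_sub hp.one_le]
    rfl
  have hp0 : (p : ℚ) ≠ 0 := by exact_mod_cast hp.ne_zero
  have hp1 : (p : ℚ) - 1 ≠ 0 := sub_ne_zero.mpr (by exact_mod_cast hp.one_lt.ne')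
  rw [hP] at hQ ⊢
  obtain ⟨s', hs'⟩ : ∃ s', s = s' + 1 := ⟨s - 1, by omega⟩
  obtain ⟨u, htu⟩ : ∃ u, t = s + u := ⟨t - s, by omega⟩
  obtain ⟨e, hSe⟩ : ∃ e, S = a + e := ⟨S - a, by omega⟩
  have hQ' : Q = (-1) ^ s * ((p : ℚ) - 1) ^ u * (p : ℚ) ^ S := by
    refine mul_right_cancel₀ (pow_ne_zero s hp1) ?_
    rw [hQ, htu]
    ring
  rw [hQ', hpoly, show t - s + 1 = u + 1 by omega, show S + 1 - (a + 1) = e by omega, htu, hSe,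
    hs', Nat.add_sub_cancel]
  field_simp
  ring

end LocalFactor

lemma Nat.gcd_prime_pow_of_factorization_le {p n a : ℕ} (hp : p.Prime) (hn : n ≠ 0)
    (h : n.factorization p ≤ a) : n.gcd (p ^ a) = p ^ n.factorization p := by
  obtain ⟨i, -, hi⟩ := (Nat.dvd_prime_pow hp).mp (Nat.gcd_dvd_right n (p ^ a))
  refine Nat.dvd_antisymm ?_ (Nat.dvd_gcd (Nat.ordProj_dvd n p) (pow_dvd_pow p h))
  rw [hi]
  exact pow_dvd_pow p ((hp.pow_dvd_iff_le_factorization hn).mp (hi ▸ Nat.gcd_dvd_left n _))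

lemma Finset.exists_factorization_eq_factorization_lcm {ι : Type*} {s : Finset ι} {f : ι → ℕ}
    (hf : ∀ i ∈ s, f i ≠ 0) (hs : s.Nonempty) (p : ℕ) :
    ∃ i ∈ s, (f i).factorization p = (s.lcm f).factorization p := by
  obtain ⟨i, hi, h⟩ := exists_mem_eq_sup s hs fun i => (f i).factorization p
  exact ⟨i, hi, by rw [factorization_lcm hf, h]⟩

theorem orbE_main_formula {r : ℕ} (m : Fin r → ℕ) (hm : ∀ j, 0 < m j) :
    orbE m = ∏ p ∈ (Finset.univ.lcm m).primeFactors,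
      (((p : ℚ) - 1) ^
          ((Finset.univ.filter fun j => p ∣ m j).card -
              (Finset.univ.filter fun j =>
                (m j).factorization p = (Finset.univ.lcm m).factorization p).card + 1) *
        (p : ℚ) ^
          ((∑ j ∈ Finset.univ.filter fun j => 1 ≤ (m j).factorization p,
              ((m j).factorization p - 1)) + 1 - (Finset.univ.lcm m).factorization p) *
        hpoly (Finset.univ.filter fun j =>
          (m j).factorization p = (Finset.univ.lcm m).factorization p).card (p : ℚ)) := by
  have hm0 : ∀ j ∈ univ, m j ≠ 0 := fun j _ => (hm j).ne'
  have hM : univ.lcm m ≠ 0 := lcm_ne_zero_iff.mpr hm0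
  rw [orbE_eq_orbMean, orbMean_eq_prod_primeFactors m hM]
  refine prod_congr rfl fun p hpM => ?_
  have hp := Nat.prime_of_mem_primeFactors hpM
  have hle : ∀ j, (m j).factorization p ≤ (univ.lcm m).factorization p := fun j =>
    factorization_lcm hm0 p ▸ le_sup (f := fun j => (m j).factorization p) (mem_univ j)
  have huniv : (univ : Finset (Fin r)).Nonempty := nonempty_iff_ne_empty.mpr fun h => by
    simp [h] at hpM
  obtain ⟨j₀, -, hj₀⟩ := exists_factorization_eq_factorization_lcm hm0 huniv p
  obtain ⟨a, ha⟩ := Nat.exists_eq_add_one.mpr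
    (hp.factorization_pos_of_dvd hM (Nat.dvd_of_mem_primeFactors hpM))
  have hdvd : ∀ j, p ∣ m j ↔ 1 ≤ (m j).factorization p := fun j =>
    hp.dvd_iff_one_le_factorization (hm j).ne'
  have hgcd : ∀ j, (m j).gcd (p ^ (univ.lcm m).factorization p) = p ^ (m j).factorization p :=
    fun j => Nat.gcd_prime_pow_of_factorization_le hp (hm j).ne' (hle j)
  rw [orbMean]
  simp only [hgcd, hdvd]
  rw [ha] at hle hj₀ ⊢
  rw [Nat.cast_pow]
  exact sum_range_prime_pow_prod_vonSterneck_div hp _ hle ⟨j₀, hj₀⟩
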